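/- arXiv:1607.03351 — 10 statements merged into one kernel-verified Lean document; each statement's English description precedes it below -/
import Mathlib

section
/- The function φ is convex on the interval (0,π); that is, for all θ₁, θ₂ ∈ (0,π) and all t ∈ [0,1], φ(t·θ₁ + (1−t)·θ₂) ≤ t·φ(θ₁) + (1−t)·φ(θ₂). -/
open Real Set

section Aux
open MeasureTheory

lemma tanh_hasDerivAt (x : ℝ) : HasDerivAt Real.tanh (1 / Real.cosh x ^ 2) x := by
  have h : HasDerivAt (fun y => Real.sinh y / Real.cosh y)
      ((Real.cosh x * Real.cosh x - Real.sinh x * Real.sinh x) / Real.cosh x ^ 2) x :=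
    (Real.hasDerivAt_sinh x).div (Real.hasDerivAt_cosh x) (Real.cosh_pos x).ne'
  have e1 : Real.cosh x * Real.cosh x - Real.sinh x * Real.sinh x = 1 := by
    have := Real.cosh_sq_sub_sinh_sq x; nlinarith
  have e2 : Real.tanh = fun y => Real.sinh y / Real.cosh y :=
    funext Real.tanh_eq_sinh_div_cosh
  rw [e2, ← e1]; exact h

lemma tanh_concaveOn : ConcaveOn ℝ (Ici (0:ℝ)) Real.tanh := by
  have hD : Convex ℝ (Ici (0:ℝ)) := convex_Ici 0
  refine concaveOn_of_hasDerivWithinAt2_nonpos hD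
    (f' := fun x => 1 / Real.cosh x ^ 2)
    (f'' := fun x => (0 * Real.cosh x ^ 2 - 1 * (2 * Real.cosh x ^ 1 * Real.sinh x)) /
      (Real.cosh x ^ 2) ^ 2) ?_ ?_ ?_ ?_
  · exact fun x _ => (tanh_hasDerivAt x).continuousAt.continuousWithinAt
  · exact fun x _ => (tanh_hasDerivAt x).hasDerivWithinAt
  · intro x _
    exact ((hasDerivAt_const x 1).div ((Real.hasDerivAt_cosh x).pow 2)
      (pow_ne_zero 2 (Real.cosh_pos x).ne')).hasDerivWithinAt
  · intro x hx
    rw [interior_Ici] at hx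
    have h1 : 0 ≤ Real.sinh x := Real.sinh_nonneg_iff.mpr (le_of_lt hx)
    have h2 : 0 < Real.cosh x := Real.cosh_pos x
    apply div_nonpos_of_nonpos_of_nonneg
    · nlinarith
    · positivity

/-- the integrand -/
private noncomputable def F (θ ξ : ℝ) : ℝ :=
  Real.sinh ((π - θ) * ξ) / (Real.sinh (π * ξ) * Real.cosh (θ * ξ))

lemma F_eq {θ ξ : ℝ} (hξ : 0 < ξ) :
    F θ ξ = 1 - (Real.cosh (π * ξ) / Real.sinh (π * ξ)) * Real.tanh (θ * ξ) := by
  have hs : Real.sinh (π * ξ) ≠ 0 :=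
    (Real.sinh_pos_iff.mpr (by positivity)).ne'
  have hc : Real.cosh (θ * ξ) ≠ 0 := (Real.cosh_pos _).ne'
  rw [F, sub_mul, Real.sinh_sub, Real.tanh_eq_sinh_div_cosh]
  field_simp

lemma F_nonneg {θ ξ : ℝ} (hθ : θ ∈ Ioo (0:ℝ) π) (hξ : 0 < ξ) : 0 ≤ F θ ξ := by
  have h1 : 0 ≤ Real.sinh ((π - θ) * ξ) :=
    Real.sinh_nonneg_iff.mpr (by nlinarith [hθ.2])
  have h2 : 0 < Real.sinh (π * ξ) := Real.sinh_pos_iff.mpr (mul_pos Real.pi_pos hξ)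
  have h3 : 0 < Real.cosh (θ * ξ) := Real.cosh_pos _
  exact div_nonneg h1 (by positivity)

lemma F_le_exp {θ ξ : ℝ} (hθ : θ ∈ Ioo (0:ℝ) π) (hξ : 0 < ξ) :
    F θ ξ ≤ Real.exp (-θ * ξ) := by
  obtain ⟨hθ0, hθπ⟩ := hθ
  set a := (π - θ) * ξ
  set b := π * ξ
  have hab : a ≤ b := by simp only [a, b]; nlinarith
  have ha : 0 ≤ a := mul_nonneg (by linarith) hξ.le
  have hb : 0 < b := by positivity
  have hsb : 0 < Real.sinh b := Real.sinh_pos_iff.mpr hb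
  have hcc : (1:ℝ) ≤ Real.cosh (θ * ξ) := Real.one_le_cosh _
  -- sinh a ≤ exp (a - b) * sinh b
  have key : Real.sinh a ≤ Real.exp (a - b) * Real.sinh b := by
    rw [Real.sinh_eq, Real.sinh_eq, Real.exp_sub]
    have h1 : Real.exp (a - 2*b) ≤ Real.exp (-a) :=
      Real.exp_le_exp.mpr (by linarith)
    have h2 : Real.exp (a - 2*b) = Real.exp a / Real.exp b * (Real.exp (-b)) := by
      rw [← Real.exp_sub, ← Real.exp_add]; ring_nf
    have h3 : Real.exp a / Real.exp b * Real.exp b = Real.exp a := by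
      field_simp
    have hpos : 0 < Real.exp a / Real.exp b := by positivity
    calc (Real.exp a - Real.exp (-a)) / 2
        ≤ (Real.exp a - Real.exp (a - 2*b)) / 2 := by linarith
      _ = Real.exp a / Real.exp b * ((Real.exp b - Real.exp (-b)) / 2) := by
          rw [h2, Real.exp_neg]
          field_simp
  have heab : Real.exp (a - b) = Real.exp (-θ * ξ) := by
    congr 1; simp only [a, b]; ring
  rw [F]
  rw [div_le_iff₀ (by positivity)]
  calc Real.sinh a ≤ Real.exp (a - b) * Real.sinh b := key
    _ ≤ Real.exp (-θ * ξ) * (Real.sinh b * Real.cosh (θ * ξ)) := by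
        rw [heab]; nlinarith [mul_pos (Real.exp_pos (-θ * ξ)) hsb]

lemma F_integrable {θ : ℝ} (hθ : θ ∈ Ioo (0:ℝ) π) :
    IntegrableOn (F θ) (Ioi (0:ℝ)) := by
  apply Integrable.mono' (exp_neg_integrableOn_Ioi 0 hθ.1)
  · apply ContinuousOn.aestronglyMeasurable _ measurableSet_Ioi
    apply ContinuousOn.div
    · exact (Real.continuous_sinh.comp (continuous_const.mul continuous_id)).continuousOn
    · exact ((Real.continuous_sinh.comp (continuous_const.mul continuous_id)).mul
        (Real.continuous_cosh.comp (continuous_const.mul continuous_id))).continuousOn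
    · intro x hx
      have h2 : 0 < Real.sinh (π * x) := Real.sinh_pos_iff.mpr (mul_pos Real.pi_pos hx)
      have h3 : 0 < Real.cosh (θ * x) := Real.cosh_pos _
      exact (mul_pos h2 h3).ne'
  · filter_upwards [ae_restrict_mem measurableSet_Ioi] with ξ hξ
    rw [Real.norm_eq_abs, abs_of_nonneg (F_nonneg hθ hξ)]
    exact F_le_exp hθ hξ

lemma F_pointwise {θ₁ θ₂ a b : ℝ} (h₁ : θ₁ ∈ Ioo (0:ℝ) π) (h₂ : θ₂ ∈ Ioo (0:ℝ) π)
    (ha : 0 ≤ a) (hb : 0 ≤ b) (hab : a + b = 1) {ξ : ℝ} (hξ : 0 < ξ) :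
    F (a * θ₁ + b * θ₂) ξ ≤ a * F θ₁ ξ + b * F θ₂ ξ := by
  have hs : 0 < Real.sinh (π * ξ) := Real.sinh_pos_iff.mpr (mul_pos Real.pi_pos hξ)
  have hc : 0 < Real.cosh (π * ξ) := Real.cosh_pos _
  have hcoth : 0 < Real.cosh (π * ξ) / Real.sinh (π * ξ) := div_pos hc hs
  rw [F_eq hξ, F_eq hξ, F_eq hξ]
  have htanh := tanh_concaveOn.2 (mem_Ici.mpr (mul_nonneg h₁.1.le hξ.le))
    (mem_Ici.mpr (mul_nonneg h₂.1.le hξ.le)) ha hb hab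
  simp only [smul_eq_mul] at htanh
  have harg : a * (θ₁ * ξ) + b * (θ₂ * ξ) = (a * θ₁ + b * θ₂) * ξ := by ring
  rw [harg] at htanh
  nlinarith [mul_le_mul_of_nonneg_left htanh hcoth.le]

end Aux

/-- `φ(θ) = ∫₀^∞ sinh((π−θ)ξ) / (sinh(πξ)·cosh(θξ)) dξ`. -/
noncomputable def phi (θ : ℝ) : ℝ :=
  ∫ ξ in Ioi (0:ℝ), Real.sinh ((π - θ) * ξ) / (Real.sinh (π * ξ) * Real.cosh (θ * ξ))

theorem phi_convexOn : ConvexOn ℝ (Ioo (0:ℝ) π) phi := by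
  have hphi : ∀ θ, phi θ = ∫ ξ in Ioi (0:ℝ), F θ ξ := fun θ => rfl
  refine ⟨convex_Ioo 0 π, fun θ₁ h₁ θ₂ h₂ a b ha hb hab => ?_⟩
  have hθ : a • θ₁ + b • θ₂ ∈ Ioo (0:ℝ) π := (convex_Ioo 0 π) h₁ h₂ ha hb hab
  simp only [smul_eq_mul] at hθ ⊢
  rw [hphi, hphi, hphi]
  have i₁ := F_integrable h₁
  have i₂ := F_integrable h₂
  have iθ := F_integrable hθ
  have hsum : MeasureTheory.IntegrableOn (fun ξ => a * F θ₁ ξ + b * F θ₂ ξ) (Ioi (0:ℝ)) :=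
    ((i₁.const_mul a).add (i₂.const_mul b))
  calc ∫ ξ in Ioi (0:ℝ), F (a * θ₁ + b * θ₂) ξ
      ≤ ∫ ξ in Ioi (0:ℝ), (a * F θ₁ ξ + b * F θ₂ ξ) :=
        MeasureTheory.setIntegral_mono_on iθ hsum measurableSet_Ioi
          (fun ξ hξ => F_pointwise h₁ h₂ ha hb hab hξ)
    _ = a * (∫ ξ in Ioi (0:ℝ), F θ₁ ξ) + b * ∫ ξ in Ioi (0:ℝ), F θ₂ ξ := by
        rw [MeasureTheory.integral_add (i₁.const_mul a) (i₂.const_mul b),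
          MeasureTheory.integral_const_mul, MeasureTheory.integral_const_mul]
end

section
/- The function θ ↦ φ(θ) − (log 2 / 2)·cot(θ/2) is convex on the interval (0,π). (Equivalently, its derivative φ' − (log 2 / 2)·ψ', where ψ(θ) = cot(θ/2), is increasing on (0,π).) -/
open Real Set

/-!
Differentiating twice under the integral sign gives
`φ''(θ) = ∫₀^∞ 2ξ² coth(πξ) sinh(θξ) / cosh³(θξ) dξ`. Since `coth ≥ 1` and
`∫₀^∞ ξ² sinh(θξ) / cosh³(θξ) dξ = log 2 / θ³`, this is at least `2 log 2 / θ³`. On the other hand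
`ψ''(θ) = cos(θ/2) / (2 sin³(θ/2)) ≤ 4 / θ³`, because `x³ cos x ≤ sin³ x` for `0 ≤ x ≤ π/2`.
Hence the second derivative of `φ - (log 2 / 2) ψ` is nonnegative on `(0, π)`.
-/

open MeasureTheory Filter Topology

lemma inv_cosh_le_two_mul_exp_neg (t : ℝ) : (cosh t)⁻¹ ≤ 2 * exp (-t) := by
  rw [inv_le_iff_one_le_mul₀ (cosh_pos t), cosh_eq]
  have h : exp t * exp (-t) = 1 := by rw [← exp_add, add_neg_cancel, exp_zero]
  nlinarith [exp_pos (-t)]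

lemma inv_cosh_sq_le_two_mul_exp_neg {s t : ℝ} (hs : 0 ≤ s) (hst : s ≤ t) :
    (cosh t ^ 2)⁻¹ ≤ 2 * exp (-s) := calc
  (cosh t ^ 2)⁻¹ ≤ (cosh t)⁻¹ :=
    inv_anti₀ (cosh_pos t) (le_self_pow₀ (one_le_cosh t) two_ne_zero)
  _ ≤ (cosh s)⁻¹ :=
    inv_anti₀ (cosh_pos s) (cosh_le_cosh.2 (abs_le_abs_of_nonneg hs hst))
  _ ≤ 2 * exp (-s) := inv_cosh_le_two_mul_exp_neg s

lemma sinh_div_cosh_pow_three_le_inv_cosh_sq (t : ℝ) : sinh t / cosh t ^ 3 ≤ (cosh t ^ 2)⁻¹ := by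
  have hc := cosh_pos t
  rw [div_le_iff₀ (by positivity), show (cosh t ^ 2)⁻¹ * cosh t ^ 3 = cosh t by field_simp]
  exact (sinh_lt_cosh t).le

lemma one_le_cosh_div_sinh {t : ℝ} (ht : 0 < t) : 1 ≤ cosh t / sinh t :=
  (one_le_div (sinh_pos_iff.2 ht)).2 (sinh_lt_cosh t).le

-- `cosh t - sinh t = exp (-t) ≤ 1 ≤ sinh t / t`
lemma cosh_div_sinh_le_one_add_inv {t : ℝ} (ht : 0 < t) : cosh t / sinh t ≤ 1 + t⁻¹ := by
  have hs : 0 < sinh t := sinh_pos_iff.2 ht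
  have h1 : exp (-t) ≤ 1 := exp_le_one_iff.2 (by linarith)
  have h2 : t ≤ sinh t := self_le_sinh_iff.2 ht.le
  rw [div_le_iff₀ hs, add_mul, one_mul, ← sub_le_iff_le_add', cosh_sub_sinh,
    inv_mul_eq_div, le_div_iff₀ ht]
  nlinarith

lemma integrableOn_pow_mul_exp_neg_mul (n : ℕ) {b : ℝ} (hb : 0 < b) :
    IntegrableOn (fun x : ℝ => x ^ n * exp (-b * x)) (Ioi 0) := by
  simpa [rpow_natCast] using integrableOn_rpow_mul_exp_neg_mul_rpow (s := n) (p := 1)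
    (neg_one_lt_zero.trans_le n.cast_nonneg) one_pos hb

noncomputable def sqSinhDivCoshCubePrimitive (u : ℝ) : ℝ :=
  u * sinh u / cosh u - (u / cosh u) ^ 2 / 2 - log (cosh u)

lemma hasDerivAt_sqSinhDivCoshCubePrimitive (u : ℝ) :
    HasDerivAt sqSinhDivCoshCubePrimitive (u ^ 2 * sinh u / cosh u ^ 3) u := by
  have hc := (cosh_pos u).ne'
  have h := (((hasDerivAt_id u).mul (hasDerivAt_sinh u)).div (hasDerivAt_cosh u) hc).sub
    ((((hasDerivAt_id u).div (hasDerivAt_cosh u) hc).pow 2).div_const 2) |>.sub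
    ((hasDerivAt_cosh u).log hc)
  refine h.congr_deriv ?_
  have hsq : sinh u ^ 2 = cosh u ^ 2 - 1 := by linarith [cosh_sq u]
  simp only [id, Pi.div_apply, Pi.mul_apply, Nat.reduceSub, pow_one]
  field_simp
  linear_combination (-2 * u * cosh u) * hsq

lemma tendsto_div_cosh_atTop : Tendsto (fun u => u / cosh u) atTop (𝓝 0) := by
  have h := (tendsto_pow_mul_exp_neg_atTop_nhds_zero 1).const_mul 2
  rw [mul_zero] at h
  refine squeeze_zero' ?_ ?_ h <;> filter_upwards [eventually_ge_atTop 0] with u hu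
  · exact div_nonneg hu (cosh_pos u).le
  · calc u / cosh u = u * (cosh u)⁻¹ := div_eq_mul_inv _ _
      _ ≤ u * (2 * exp (-u)) := mul_le_mul_of_nonneg_left (inv_cosh_le_two_mul_exp_neg u) hu
      _ = 2 * (u ^ 1 * exp (-u)) := by ring

lemma tendsto_sqSinhDivCoshCubePrimitive :
    Tendsto sqSinhDivCoshCubePrimitive atTop (𝓝 (log 2)) := by
  have hexp := tendsto_exp_neg_atTop_nhds_zero
  have hcosh : Tendsto (fun u => cosh u * exp (-u)) atTop (𝓝 (1 / 2)) := by
    have h := ((hexp.pow 2).const_add 1).div_const 2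
    norm_num at h
    refine h.congr fun u => ?_
    have h1 : exp u * exp (-u) = 1 := by rw [← exp_add, add_neg_cancel, exp_zero]
    rw [cosh_eq]
    linear_combination (-1 / 2 : ℝ) * h1
  have hlog : Tendsto (fun u => u - log (cosh u)) atTop (𝓝 (log 2)) := by
    have h := ((continuousAt_log (by norm_num)).tendsto.comp hcosh).neg
    rw [one_div, log_inv, neg_neg] at h
    refine h.congr fun u => ?_
    simp [log_mul (cosh_pos u).ne' (exp_pos _).ne', sub_eq_add_neg]
  -- the primitive is `(u - log (cosh u)) - u / cosh u * exp (-u) - (u / cosh u) ^ 2 / 2`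
  have h := (hlog.sub (tendsto_div_cosh_atTop.mul hexp)).sub
    (tendsto_div_cosh_atTop.pow 2 |>.div_const 2)
  norm_num at h
  refine h.congr fun u => ?_
  have hc := (cosh_pos u).ne'
  rw [sqSinhDivCoshCubePrimitive, ← cosh_sub_sinh]
  field_simp
  ring

lemma hasDerivAt_sqSinhDivCoshCubePrimitive_comp_mul {θ : ℝ} (hθ : θ ≠ 0) (x : ℝ) :
    HasDerivAt (fun x => sqSinhDivCoshCubePrimitive (θ * x) / θ ^ 3)
      (x ^ 2 * sinh (θ * x) / cosh (θ * x) ^ 3) x := by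
  refine (((hasDerivAt_sqSinhDivCoshCubePrimitive (θ * x)).comp x
    ((hasDerivAt_id x).const_mul θ)).div_const (θ ^ 3)).congr_deriv ?_
  have hc := (cosh_pos (θ * x)).ne'
  field_simp

lemma tendsto_sqSinhDivCoshCubePrimitive_comp_mul {θ : ℝ} (hθ : 0 < θ) :
    Tendsto (fun x => sqSinhDivCoshCubePrimitive (θ * x) / θ ^ 3) atTop (𝓝 (log 2 / θ ^ 3)) :=
  (tendsto_sqSinhDivCoshCubePrimitive.comp (tendsto_id.const_mul_atTop hθ)).div_const _

lemma sq_mul_sinh_div_cosh_pow_three_nonneg {θ x : ℝ} (hθ : 0 ≤ θ) (hx : 0 ≤ x) :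
    0 ≤ x ^ 2 * sinh (θ * x) / cosh (θ * x) ^ 3 := by
  have := sinh_nonneg_iff.2 (mul_nonneg hθ hx)
  positivity

lemma integrableOn_sq_mul_sinh_div_cosh_pow_three {θ : ℝ} (hθ : 0 < θ) :
    IntegrableOn (fun x => x ^ 2 * sinh (θ * x) / cosh (θ * x) ^ 3) (Ioi 0) :=
  integrableOn_Ioi_deriv_of_nonneg'
    (fun x _ => hasDerivAt_sqSinhDivCoshCubePrimitive_comp_mul hθ.ne' x)
    (fun _ hx => sq_mul_sinh_div_cosh_pow_three_nonneg hθ.le (le_of_lt hx))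
    (tendsto_sqSinhDivCoshCubePrimitive_comp_mul hθ)

lemma integral_sq_mul_sinh_div_cosh_pow_three {θ : ℝ} (hθ : 0 < θ) :
    ∫ x in Ioi 0, x ^ 2 * sinh (θ * x) / cosh (θ * x) ^ 3 = log 2 / θ ^ 3 := by
  rw [integral_Ioi_of_hasDerivAt_of_nonneg'
    (fun x _ => hasDerivAt_sqSinhDivCoshCubePrimitive_comp_mul hθ.ne' x)
    (fun _ hx => sq_mul_sinh_div_cosh_pow_three_nonneg hθ.le (le_of_lt hx))
    (tendsto_sqSinhDivCoshCubePrimitive_comp_mul hθ)]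
  simp [sqSinhDivCoshCubePrimitive]

-- `phi θ` unfolds to `∫ x in Ioi 0, phiKernel θ x`.
noncomputable def phiKernel (θ x : ℝ) : ℝ :=
  sinh ((π - θ) * x) / (sinh (π * x) * cosh (θ * x))

noncomputable def phiKernelDeriv (θ x : ℝ) : ℝ :=
  -(x * (cosh (π * x) / sinh (π * x)) / cosh (θ * x) ^ 2)

noncomputable def phiKernelDeriv2 (θ x : ℝ) : ℝ :=
  2 * x ^ 2 * (cosh (π * x) / sinh (π * x)) * (sinh (θ * x) / cosh (θ * x) ^ 3)

lemma measurable_phiKernel (θ : ℝ) : Measurable (phiKernel θ) := by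
  unfold phiKernel; fun_prop

lemma measurable_phiKernelDeriv (θ : ℝ) : Measurable (phiKernelDeriv θ) := by
  unfold phiKernelDeriv; fun_prop

lemma measurable_phiKernelDeriv2 (θ : ℝ) : Measurable (phiKernelDeriv2 θ) := by
  unfold phiKernelDeriv2; fun_prop

lemma hasDerivAt_phiKernel {x : ℝ} (hx : 0 < x) (θ : ℝ) :
    HasDerivAt (phiKernel · x) (phiKernelDeriv θ x) θ := by
  have hs := (sinh_pos_iff.2 (by positivity : 0 < π * x)).ne'
  have hc := (cosh_pos (θ * x)).ne'
  have h := (((hasDerivAt_id θ).const_sub π).mul_const x).sinh.div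
    ((((hasDerivAt_id θ).mul_const x).cosh).const_mul (sinh (π * x))) (mul_ne_zero hs hc)
  refine h.congr_deriv ?_
  have hadd : cosh (π * x) =
      cosh ((π - θ) * x) * cosh (θ * x) + sinh ((π - θ) * x) * sinh (θ * x) := by
    rw [← cosh_add]; ring_nf
  simp only [phiKernelDeriv, id]
  field_simp
  linear_combination hadd

lemma hasDerivAt_phiKernelDeriv {x : ℝ} (hx : 0 < x) (θ : ℝ) :
    HasDerivAt (phiKernelDeriv · x) (phiKernelDeriv2 θ x) θ := by
  have hc := (cosh_pos (θ * x)).ne'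
  have h := ((((hasDerivAt_id θ).mul_const x).cosh.pow 2).inv (pow_ne_zero 2 hc)).const_mul
    (-(x * (cosh (π * x) / sinh (π * x))))
  refine (h.congr_deriv ?_).congr_of_eventuallyEq (Eventually.of_forall fun θ => ?_)
  · simp only [phiKernelDeriv2, id, Pi.pow_apply, Nat.reduceSub, pow_one]
    field_simp
    ring
  · simp only [phiKernelDeriv, id, Pi.pow_apply, Pi.inv_apply, div_eq_mul_inv]
    ring

lemma phiKernel_nonneg {θ x : ℝ} (hθ : θ ≤ π) (hx : 0 < x) : 0 ≤ phiKernel θ x := by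
  have hs : 0 < sinh (π * x) := sinh_pos_iff.2 (by positivity)
  have hsθ : 0 ≤ sinh ((π - θ) * x) := sinh_nonneg_iff.2 (by nlinarith)
  unfold phiKernel
  positivity

lemma phiKernel_le_inv_cosh {θ x : ℝ} (hθ : 0 ≤ θ) (hx : 0 < x) :
    phiKernel θ x ≤ (cosh (θ * x))⁻¹ := by
  have hs : 0 < sinh (π * x) := sinh_pos_iff.2 (by positivity)
  rw [phiKernel, mul_comm, ← div_div, div_le_iff₀ (cosh_pos _), inv_mul_cancel₀ (cosh_pos _).ne',
    div_le_one hs, sinh_le_sinh]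
  nlinarith

lemma abs_phiKernelDeriv_le {δ θ x : ℝ} (hδ : 0 ≤ δ) (hδθ : δ ≤ θ) (hx : 0 < x) :
    |phiKernelDeriv θ x| ≤ 2 * (x + π⁻¹) * exp (-δ * x) := by
  have hπx : 0 < π * x := by positivity
  have hcoth := one_le_cosh_div_sinh hπx
  rw [phiKernelDeriv, abs_neg, abs_of_nonneg (by positivity)]
  calc x * (cosh (π * x) / sinh (π * x)) / cosh (θ * x) ^ 2
      = x * (cosh (π * x) / sinh (π * x)) * (cosh (θ * x) ^ 2)⁻¹ := div_eq_mul_inv _ _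
    _ ≤ x * (1 + (π * x)⁻¹) * (2 * exp (-(δ * x))) :=
      mul_le_mul (mul_le_mul_of_nonneg_left (cosh_div_sinh_le_one_add_inv hπx) hx.le)
        (inv_cosh_sq_le_two_mul_exp_neg (by positivity) (by nlinarith)) (by positivity)
        (by positivity)
    _ = 2 * (x + π⁻¹) * exp (-δ * x) := by field_simp

lemma abs_phiKernelDeriv2_le {δ θ x : ℝ} (hδ : 0 ≤ δ) (hδθ : δ ≤ θ) (hx : 0 < x) :
    |phiKernelDeriv2 θ x| ≤ 4 * (x ^ 2 + π⁻¹ * x) * exp (-δ * x) := by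
  have hπx : 0 < π * x := by positivity
  have hcoth := one_le_cosh_div_sinh hπx
  have hsinh : 0 ≤ sinh (θ * x) := sinh_nonneg_iff.2 (by nlinarith)
  rw [phiKernelDeriv2, abs_of_nonneg (by positivity)]
  calc 2 * x ^ 2 * (cosh (π * x) / sinh (π * x)) * (sinh (θ * x) / cosh (θ * x) ^ 3)
      ≤ 2 * x ^ 2 * (1 + (π * x)⁻¹) * (2 * exp (-(δ * x))) :=
      mul_le_mul (mul_le_mul_of_nonneg_left (cosh_div_sinh_le_one_add_inv hπx) (by positivity))
        ((sinh_div_cosh_pow_three_le_inv_cosh_sq _).trans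
          (inv_cosh_sq_le_two_mul_exp_neg (by positivity) (by nlinarith)))
        (by positivity) (by positivity)
    _ = 4 * (x ^ 2 + π⁻¹ * x) * exp (-δ * x) := by field_simp; norm_num

lemma sq_mul_sinh_div_cosh_pow_three_le_phiKernelDeriv2 {θ x : ℝ} (hθ : 0 ≤ θ) (hx : 0 < x) :
    2 * (x ^ 2 * sinh (θ * x) / cosh (θ * x) ^ 3) ≤ phiKernelDeriv2 θ x := by
  have hsinh : 0 ≤ sinh (θ * x) := sinh_nonneg_iff.2 (by positivity)
  calc 2 * (x ^ 2 * sinh (θ * x) / cosh (θ * x) ^ 3)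
      = 2 * x ^ 2 * 1 * (sinh (θ * x) / cosh (θ * x) ^ 3) := by ring
    _ ≤ phiKernelDeriv2 θ x := by
      unfold phiKernelDeriv2
      gcongr
      exact one_le_cosh_div_sinh (by positivity)

lemma integrableOn_two_mul_add_inv_pi_mul_exp {δ : ℝ} (hδ : 0 < δ) :
    IntegrableOn (fun x => 2 * (x + π⁻¹) * exp (-δ * x)) (Ioi 0) :=
  IntegrableOn.congr_fun (((integrableOn_pow_mul_exp_neg_mul 1 hδ).add
    ((integrableOn_pow_mul_exp_neg_mul 0 hδ).const_mul π⁻¹)).const_mul 2)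
    (fun x _ => by simp only [Pi.add_apply]; ring) measurableSet_Ioi

lemma integrableOn_four_mul_sq_add_inv_pi_mul_exp {δ : ℝ} (hδ : 0 < δ) :
    IntegrableOn (fun x => 4 * (x ^ 2 + π⁻¹ * x) * exp (-δ * x)) (Ioi 0) :=
  IntegrableOn.congr_fun (((integrableOn_pow_mul_exp_neg_mul 2 hδ).add
    ((integrableOn_pow_mul_exp_neg_mul 1 hδ).const_mul π⁻¹)).const_mul 4)
    (fun x _ => by simp only [Pi.add_apply]; ring) measurableSet_Ioi

lemma integrableOn_phiKernel {θ : ℝ} (h0 : 0 < θ) (hπ : θ ≤ π) :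
    IntegrableOn (phiKernel θ) (Ioi 0) := by
  refine ((exp_neg_integrableOn_Ioi 0 h0).const_mul 2).mono'
    (measurable_phiKernel θ).aestronglyMeasurable
    ((ae_restrict_iff' measurableSet_Ioi).2 (Eventually.of_forall fun x hx => ?_))
  rw [norm_of_nonneg (phiKernel_nonneg hπ hx), neg_mul]
  exact (phiKernel_le_inv_cosh h0.le hx).trans (inv_cosh_le_two_mul_exp_neg _)

lemma integrableOn_phiKernelDeriv {θ : ℝ} (h0 : 0 < θ) :
    IntegrableOn (phiKernelDeriv θ) (Ioi 0) :=
  (integrableOn_two_mul_add_inv_pi_mul_exp h0).mono'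
    (measurable_phiKernelDeriv θ).aestronglyMeasurable
    ((ae_restrict_iff' measurableSet_Ioi).2 (Eventually.of_forall fun _ hx =>
      abs_phiKernelDeriv_le h0.le le_rfl hx))

lemma integrableOn_phiKernelDeriv2 {θ : ℝ} (h0 : 0 < θ) :
    IntegrableOn (phiKernelDeriv2 θ) (Ioi 0) :=
  (integrableOn_four_mul_sq_add_inv_pi_mul_exp h0).mono'
    (measurable_phiKernelDeriv2 θ).aestronglyMeasurable
    ((ae_restrict_iff' measurableSet_Ioi).2 (Eventually.of_forall fun _ hx =>
      abs_phiKernelDeriv2_le h0.le le_rfl hx))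

noncomputable def phiDeriv (θ : ℝ) : ℝ := ∫ x in Ioi 0, phiKernelDeriv θ x

noncomputable def phiDeriv2 (θ : ℝ) : ℝ := ∫ x in Ioi 0, phiKernelDeriv2 θ x

lemma hasDerivAt_phi {θ₀ : ℝ} (h0 : 0 < θ₀) (hπ : θ₀ ≤ π) :
    HasDerivAt phi (phiDeriv θ₀) θ₀ :=
  (hasDerivAt_integral_of_dominated_loc_of_deriv_le (Ioi_mem_nhds (half_lt_self h0))
    (Eventually.of_forall fun θ => (measurable_phiKernel θ).aestronglyMeasurable)
    (integrableOn_phiKernel h0 hπ) (integrableOn_phiKernelDeriv h0).aestronglyMeasurable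
    ((ae_restrict_iff' measurableSet_Ioi).2 (Eventually.of_forall fun _ hx _ hθ =>
      abs_phiKernelDeriv_le (half_pos h0).le (le_of_lt hθ) hx))
    (integrableOn_two_mul_add_inv_pi_mul_exp (half_pos h0))
    ((ae_restrict_iff' measurableSet_Ioi).2 (Eventually.of_forall fun _ hx θ _ =>
      hasDerivAt_phiKernel hx θ))).2

lemma hasDerivAt_phiDeriv {θ₀ : ℝ} (h0 : 0 < θ₀) : HasDerivAt phiDeriv (phiDeriv2 θ₀) θ₀ :=
  (hasDerivAt_integral_of_dominated_loc_of_deriv_le (Ioi_mem_nhds (half_lt_self h0))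
    (Eventually.of_forall fun θ => (measurable_phiKernelDeriv θ).aestronglyMeasurable)
    (integrableOn_phiKernelDeriv h0) (integrableOn_phiKernelDeriv2 h0).aestronglyMeasurable
    ((ae_restrict_iff' measurableSet_Ioi).2 (Eventually.of_forall fun _ hx _ hθ =>
      abs_phiKernelDeriv2_le (half_pos h0).le (le_of_lt hθ) hx))
    (integrableOn_four_mul_sq_add_inv_pi_mul_exp (half_pos h0))
    ((ae_restrict_iff' measurableSet_Ioi).2 (Eventually.of_forall fun _ hx θ _ =>
      hasDerivAt_phiKernelDeriv hx θ))).2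

lemma two_mul_log_two_div_pow_three_le_phiDeriv2 {θ : ℝ} (hθ : 0 < θ) :
    2 * (log 2 / θ ^ 3) ≤ phiDeriv2 θ := by
  rw [← integral_sq_mul_sinh_div_cosh_pow_three hθ, ← integral_const_mul]
  exact setIntegral_mono_on ((integrableOn_sq_mul_sinh_div_cosh_pow_three hθ).const_mul 2)
    (integrableOn_phiKernelDeriv2 hθ) measurableSet_Ioi
    fun _ hx => sq_mul_sinh_div_cosh_pow_three_le_phiKernelDeriv2 hθ.le hx

lemma cos_le_one_sub_sq_div_two_add_pow_four_div (x : ℝ) :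
    cos x ≤ 1 - x ^ 2 / 2 + x ^ 4 / 24 := by
  have hmono : MonotoneOn (fun y => 1 - y ^ 2 / 2 + y ^ 4 / 24 - cos y) (Ici 0) := by
    refine monotoneOn_of_hasDerivWithinAt_nonneg (convex_Ici 0) (by fun_prop)
      (fun y _ => ?_) (fun y hy => ?_) (f' := fun y => -y + y ^ 3 / 6 + sin y)
    · refine HasDerivAt.hasDerivWithinAt ?_
      exact (((hasDerivAt_pow 2 y).div_const 2).const_sub 1 |>.add
        ((hasDerivAt_pow 4 y).div_const 24)).sub (hasDerivAt_cos y) |>.congr_deriv (by ring)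
    · rw [interior_Ici] at hy
      linarith [sin_ge_sub_cube (le_of_lt hy)]
  have h := hmono self_mem_Ici (abs_nonneg x) (abs_nonneg x)
  simp only [cos_zero, cos_abs, pow_abs] at h
  rw [abs_of_nonneg (by positivity : (0:ℝ) ≤ x ^ 4)] at h
  norm_num at h
  linarith

-- `sin x ≥ x (1 - x²/6) ≥ 0` and `(1 - x²/6)³ - (1 - x²/2 + x⁴/24) = x⁴ (9 - x²) / 216`
lemma pow_three_mul_cos_le_sin_pow_three {x : ℝ} (hx₀ : 0 ≤ x) (hx : x ^ 2 ≤ 6) :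
    x ^ 3 * cos x ≤ sin x ^ 3 := by
  have ha : 0 ≤ x - x ^ 3 / 6 := by nlinarith
  have hsin := pow_le_pow_left₀ ha (sin_ge_sub_cube hx₀) 3
  have hcos := mul_le_mul_of_nonneg_left (cos_le_one_sub_sq_div_two_add_pow_four_div x)
    (pow_nonneg hx₀ 3)
  have hgap : 0 ≤ x ^ 3 * (x ^ 4 * (9 - x ^ 2) / 216) := by
    have : 0 ≤ 9 - x ^ 2 := by linarith
    positivity
  nlinarith

lemma hasDerivAt_cot_half {θ : ℝ} (hs : sin (θ / 2) ≠ 0) :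
    HasDerivAt (fun θ => cot (θ / 2)) (-(1 / (2 * sin (θ / 2) ^ 2))) θ := by
  have hhalf := (hasDerivAt_id θ).div_const 2
  have h := ((hasDerivAt_cos _).comp θ hhalf).div ((hasDerivAt_sin _).comp θ hhalf) hs
  refine (h.congr_deriv ?_).congr_of_eventuallyEq
    (Eventually.of_forall fun θ => cot_eq_cos_div_sin _)
  simp only [Function.comp, id]
  field_simp
  linear_combination (-1 : ℝ) * sin_sq_add_cos_sq (θ / 2)

lemma hasDerivAt_neg_inv_two_mul_sin_half_sq {θ : ℝ} (hs : sin (θ / 2) ≠ 0) :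
    HasDerivAt (fun θ => -(1 / (2 * sin (θ / 2) ^ 2))) (cos (θ / 2) / (2 * sin (θ / 2) ^ 3)) θ := by
  have h := ((((hasDerivAt_sin _).comp θ ((hasDerivAt_id θ).div_const 2)).pow 2).const_mul 2).inv
    (by simp [hs])
  refine (h.neg.congr_deriv ?_).congr_of_eventuallyEq (Eventually.of_forall fun θ => by simp)
  simp only [Function.comp, id, Pi.pow_apply, Nat.reduceSub, pow_one]
  field_simp
  ring

lemma cos_half_div_two_mul_sin_half_pow_three_le {θ : ℝ} (h0 : 0 < θ) (hπ : θ < π) :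
    cos (θ / 2) / (2 * sin (θ / 2) ^ 3) ≤ 4 / θ ^ 3 := by
  have hs : 0 < sin (θ / 2) := sin_pos_of_pos_of_lt_pi (half_pos h0) (by linarith)
  have h := pow_three_mul_cos_le_sin_pow_three (half_pos h0).le (by nlinarith [pi_lt_four])
  rw [div_le_div_iff₀ (by positivity) (by positivity)]
  nlinarith

theorem phi_sub_log2_half_cot_convexOn :
    ConvexOn ℝ (Ioo (0:ℝ) π) (fun θ => phi θ - (Real.log 2 / 2) * Real.cot (θ / 2)) := by
  have hsin (θ : ℝ) (hθ : θ ∈ Ioo 0 π) : sin (θ / 2) ≠ 0 :=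
    (sin_pos_of_pos_of_lt_pi (half_pos hθ.1) (by linarith [hθ.2, pi_pos])).ne'
  have hf' (θ : ℝ) (hθ : θ ∈ Ioo 0 π) : HasDerivAt (fun θ => phi θ - log 2 / 2 * cot (θ / 2))
      (phiDeriv θ - log 2 / 2 * -(1 / (2 * sin (θ / 2) ^ 2))) θ :=
    (hasDerivAt_phi hθ.1 hθ.2.le).sub ((hasDerivAt_cot_half (hsin θ hθ)).const_mul _)
  have hf'' (θ : ℝ) (hθ : θ ∈ Ioo 0 π) :
      HasDerivAt (fun θ => phiDeriv θ - log 2 / 2 * -(1 / (2 * sin (θ / 2) ^ 2)))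
        (phiDeriv2 θ - log 2 / 2 * (cos (θ / 2) / (2 * sin (θ / 2) ^ 3))) θ :=
    (hasDerivAt_phiDeriv hθ.1).sub
      ((hasDerivAt_neg_inv_two_mul_sin_half_sq (hsin θ hθ)).const_mul _)
  rw [← interior_Ioo] at hf' hf''
  refine convexOn_of_hasDerivWithinAt2_nonneg (convex_Ioo 0 π)
    (fun θ hθ => (hf' θ (by rwa [interior_Ioo])).continuousAt.continuousWithinAt)
    (fun θ hθ => (hf' θ hθ).hasDerivWithinAt) (fun θ hθ => (hf'' θ hθ).hasDerivWithinAt)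
    (fun θ hθ => ?_)
  rw [interior_Ioo] at hθ
  have hφ := two_mul_log_two_div_pow_three_le_phiDeriv2 hθ.1
  have hψ := mul_le_mul_of_nonneg_left (cos_half_div_two_mul_sin_half_pow_three_le hθ.1 hθ.2)
    (by positivity : 0 ≤ log 2 / 2)
  linarith [show log 2 / 2 * (4 / θ ^ 3) = 2 * (log 2 / θ ^ 3) by ring]
end

section
/- For every x ∈ (0,1), φ(πx) = (1/π)·∫₀^∞ coth(y)·(tanh(y) − tanh(x·y)) dy, where the integral on the right-hand side converges. -/
open Real Set MeasureTheory

/-- `tanh` is monotone on nonnegative reals. -/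
lemma tanh_mono_aux {a b : ℝ} (hab : a ≤ b) : Real.tanh a ≤ Real.tanh b := by
  rw [Real.tanh_eq_sinh_div_cosh, Real.tanh_eq_sinh_div_cosh,
    div_le_div_iff₀ (Real.cosh_pos a) (Real.cosh_pos b)]
  have h : Real.sinh (a - b) ≤ 0 := by
    rw [← Real.sinh_zero]
    exact Real.sinh_le_sinh.2 (by linarith)
  rw [Real.sinh_sub] at h
  linarith

theorem phi_eq_coth_integral (x : ℝ) (hx : x ∈ Ioo (0:ℝ) 1) :
    IntegrableOn (fun y => (Real.cosh y / Real.sinh y) * (Real.tanh y - Real.tanh (x * y)))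
      (Ioi (0:ℝ)) ∧
    phi (π * x) =
      (1 / π) * ∫ y in Ioi (0:ℝ),
        (Real.cosh y / Real.sinh y) * (Real.tanh y - Real.tanh (x * y)) := by
  obtain ⟨hx0, hx1⟩ := hx
  -- pointwise identity on `Ioi 0`
  have key : ∀ y ∈ Ioi (0:ℝ),
      Real.sinh ((1 - x) * y) / (Real.sinh y * Real.cosh (x * y)) =
      (Real.cosh y / Real.sinh y) * (Real.tanh y - Real.tanh (x * y)) := by
    intro y hy
    have hy : (0:ℝ) < y := hy
    have hs : Real.sinh y ≠ 0 := ne_of_gt (Real.sinh_pos_iff.2 hy)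
    have hc : Real.cosh y ≠ 0 := ne_of_gt (Real.cosh_pos y)
    have hcx : Real.cosh (x * y) ≠ 0 := ne_of_gt (Real.cosh_pos (x * y))
    have h1 : (1 - x) * y = y - x * y := by ring
    rw [h1, Real.sinh_sub, Real.tanh_eq_sinh_div_cosh, Real.tanh_eq_sinh_div_cosh]
    field_simp
  -- bound : 0 ≤ f y ≤ 2 exp (-(2*x)*y) on Ioi 0
  have bound : ∀ y ∈ Ioi (0:ℝ),
      ‖(Real.cosh y / Real.sinh y) * (Real.tanh y - Real.tanh (x * y))‖
        ≤ 2 * Real.exp (-(2 * x) * y) := by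
    intro y hy
    have hy : (0:ℝ) < y := hy
    have hs : (0:ℝ) < Real.sinh y := Real.sinh_pos_iff.2 hy
    have hxy : (0:ℝ) < x * y := mul_pos hx0 hy
    have hcoth1 : 1 ≤ Real.cosh y / Real.sinh y := by
      rw [le_div_iff₀ hs, one_mul]
      exact (Real.sinh_lt_cosh y).le
    have hcoth0 : 0 < Real.cosh y / Real.sinh y := div_pos (Real.cosh_pos y) hs
    have htle : Real.tanh (x * y) ≤ Real.tanh y := tanh_mono_aux (by nlinarith)
    have ht0 : 0 ≤ Real.tanh (x * y) := by
      rw [Real.tanh_eq_sinh_div_cosh]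
      exact div_nonneg (Real.sinh_pos_iff.2 hxy).le (Real.cosh_pos (x * y)).le
    have hnonneg : 0 ≤ (Real.cosh y / Real.sinh y) * (Real.tanh y - Real.tanh (x * y)) :=
      mul_nonneg hcoth0.le (by linarith)
    rw [Real.norm_eq_abs, abs_of_nonneg hnonneg]
    -- coth y * tanh y = 1
    have hct : (Real.cosh y / Real.sinh y) * Real.tanh y = 1 := by
      rw [Real.tanh_eq_sinh_div_cosh]
      field_simp
    have h2 : (Real.cosh y / Real.sinh y) * (Real.tanh y - Real.tanh (x * y))
        ≤ 1 - Real.tanh (x * y) := by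
      have := mul_le_mul_of_nonneg_right hcoth1 ht0
      rw [mul_sub, hct]
      nlinarith
    have h3 : 1 - Real.tanh (x * y) ≤ 2 * Real.exp (-(2 * x) * y) := by
      have hcx : (0:ℝ) < Real.cosh (x * y) := Real.cosh_pos (x * y)
      have h4 : 1 - Real.tanh (x * y) = Real.exp (-(x * y)) / Real.cosh (x * y) := by
        rw [Real.tanh_eq_sinh_div_cosh, ← Real.cosh_sub_sinh]
        field_simp
      have h5 : Real.exp (x * y) / 2 ≤ Real.cosh (x * y) := by
        rw [Real.cosh_eq]
        have := (Real.exp_pos (-(x * y))).le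
        linarith
      rw [h4]
      have h6 : Real.exp (-(x * y)) / Real.cosh (x * y)
          ≤ Real.exp (-(x * y)) / (Real.exp (x * y) / 2) := by
        apply div_le_div_of_nonneg_left (Real.exp_pos _).le _ h5
        positivity
      refine h6.trans (le_of_eq ?_)
      have h7 : -(2 * x) * y = -(x * y) - x * y := by ring
      rw [h7, Real.exp_sub, Real.exp_neg (x * y)]
      have := (Real.exp_pos (x * y)).ne'
      field_simp
    linarith
  -- measurability
  have hmeas : AEStronglyMeasurable
      (fun y => (Real.cosh y / Real.sinh y) * (Real.tanh y - Real.tanh (x * y)))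
      (volume.restrict (Ioi (0:ℝ))) := by
    apply ContinuousOn.aestronglyMeasurable _ measurableSet_Ioi
    simp only [Real.tanh_eq_sinh_div_cosh]
    have hct : Continuous fun y : ℝ => Real.sinh y / Real.cosh y :=
      Real.continuous_sinh.div Real.continuous_cosh (fun y => (Real.cosh_pos y).ne')
    apply ContinuousOn.mul
    · exact Real.continuous_cosh.continuousOn.div Real.continuous_sinh.continuousOn
        (fun y hy => ne_of_gt (Real.sinh_pos_iff.2 hy))
    · exact (hct.sub (hct.comp (continuous_const.mul continuous_id))).continuousOn
  have hint : IntegrableOn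
      (fun y => (Real.cosh y / Real.sinh y) * (Real.tanh y - Real.tanh (x * y)))
      (Ioi (0:ℝ)) := by
    apply Integrable.mono' ((exp_neg_integrableOn_Ioi 0 (by linarith : (0:ℝ) < 2 * x)).const_mul 2)
      hmeas
    exact (ae_restrict_iff' measurableSet_Ioi).2 (Filter.Eventually.of_forall bound)
  refine ⟨hint, ?_⟩
  -- change of variables
  have hπ : (0:ℝ) < π := Real.pi_pos
  have hcov := integral_comp_mul_left_Ioi
    (fun y => Real.sinh ((1 - x) * y) / (Real.sinh y * Real.cosh (x * y))) 0 hπ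
  simp only [mul_zero, smul_eq_mul] at hcov
  have hphi : phi (π * x) = ∫ ξ in Ioi (0:ℝ),
      Real.sinh ((1 - x) * (π * ξ)) / (Real.sinh (π * ξ) * Real.cosh (x * (π * ξ))) := by
    unfold phi
    congr 1
    ext ξ
    have h1 : (π - π * x) * ξ = (1 - x) * (π * ξ) := by ring
    have h2 : π * x * ξ = x * (π * ξ) := by ring
    rw [h1, h2]
  rw [hphi, hcov, one_div]
  congr 1
  exact setIntegral_congr_fun measurableSet_Ioi key
end

section
/- The function I(x) = log(cosh x)/x is concave on (0,∞); that is, for all x₁, x₂ > 0 and all t ∈ [0,1], I(t·x₁ + (1−t)·x₂) ≥ t·I(x₁) + (1−t)·I(x₂). -/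
/-!
Since `log ∘ cosh` is an antiderivative of `tanh` vanishing at `0`, the substitution `t = s x`
gives `log (cosh x) / x = ∫ s in 0..1, tanh (s x)`. For `s ≥ 0` each `x ↦ tanh (s x)` is concave
on `[0, ∞)`, because `tanh' = 1 / cosh²` decreases there, and an integral of concave functions
is concave.
-/

open Real Set intervalIntegral

theorem ConcaveOn.intervalIntegral {D : Set ℝ} {f : ℝ → ℝ → ℝ} {a b : ℝ} (hab : a ≤ b)
    (hf : ∀ s ∈ Icc a b, ConcaveOn ℝ D (f s))
    (hint : ∀ x ∈ D, IntervalIntegrable (fun s => f s x) MeasureTheory.volume a b) :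
    ConcaveOn ℝ D (fun x => ∫ s in a..b, f s x) := by
  refine ⟨(hf a ⟨le_rfl, hab⟩).1, fun x hx y hy α β hα hβ hαβ => ?_⟩
  have hxy : α • x + β • y ∈ D := (hf a ⟨le_rfl, hab⟩).1 hx hy hα hβ hαβ
  calc α • (∫ s in a..b, f s x) + β • ∫ s in a..b, f s y
      = ∫ s in a..b, α • f s x + β • f s y := by
        simp only [smul_eq_mul]
        rw [integral_add ((hint x hx).const_mul α) ((hint y hy).const_mul β),
          integral_const_mul, integral_const_mul]
    _ ≤ ∫ s in a..b, f s (α • x + β • y) :=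
        integral_mono_on hab (((hint x hx).const_mul α).add ((hint y hy).const_mul β))
          (hint _ hxy) fun s hs => (hf s hs).2 hx hy hα hβ hαβ

theorem ConcaveOn.intervalIntegral_div_self {φ : ℝ → ℝ} (hφ : ConcaveOn ℝ (Ici 0) φ)
    (hφc : Continuous φ) :
    ConcaveOn ℝ (Ioi 0) (fun x => (∫ t in 0..x, φ t) / x) := by
  have hscaled : ∀ s ∈ Icc (0 : ℝ) 1, ConcaveOn ℝ (Ioi 0) (fun x => φ (s * x)) := fun s hs =>
    (hφ.comp_linearMap (LinearMap.mul ℝ ℝ s)).subset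
      (fun x hx => mem_Ici.2 (mul_nonneg hs.1 (le_of_lt hx))) (convex_Ioi 0)
  refine (ConcaveOn.intervalIntegral zero_le_one hscaled fun x _ =>
    (hφc.comp (continuous_id.mul continuous_const)).intervalIntegrable 0 1).congr fun x hx => ?_
  dsimp only
  rw [integral_comp_mul_right (fun s => φ s) (ne_of_gt hx), zero_mul, one_mul, smul_eq_mul,
    inv_mul_eq_div]

namespace Real

theorem hasDerivAt_tanh (x : ℝ) : HasDerivAt tanh (1 / cosh x ^ 2) x := by
  have hc : cosh x ≠ 0 := (cosh_pos x).ne'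
  have h := (hasDerivAt_sinh x).div (hasDerivAt_cosh x) hc
  rw [show sinh / cosh = tanh from funext fun y => (tanh_eq_sinh_div_cosh y).symm] at h
  refine h.congr_deriv ?_
  rw [← cosh_sq_sub_sinh_sq x]
  ring

theorem continuous_tanh : Continuous tanh :=
  continuous_iff_continuousAt.2 fun x => (hasDerivAt_tanh x).continuousAt

theorem concaveOn_tanh : ConcaveOn ℝ (Ici 0) tanh := by
  refine AntitoneOn.concaveOn_of_deriv (convex_Ici 0) continuous_tanh.continuousOn
    (fun x _ => (hasDerivAt_tanh x).differentiableAt.differentiableWithinAt) ?_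
  rw [interior_Ici]
  intro x hx y _ hxy
  rw [(hasDerivAt_tanh x).deriv, (hasDerivAt_tanh y).deriv]
  have hcosh : cosh x ≤ cosh y :=
    cosh_le_cosh.2 (by rwa [abs_of_pos hx, abs_of_pos (lt_of_lt_of_le hx hxy)])
  gcongr

theorem integral_tanh (a b : ℝ) : ∫ t in a..b, tanh t = log (cosh b) - log (cosh a) :=
  integral_eq_sub_of_hasDerivAt
    (fun x _ => by
      simpa only [tanh_eq_sinh_div_cosh] using (hasDerivAt_cosh x).log (cosh_pos x).ne')
    (continuous_tanh.intervalIntegrable a b)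

end Real

theorem log_cosh_div_self_concaveOn :
    ConcaveOn ℝ (Ioi (0:ℝ)) (fun x => Real.log (Real.cosh x) / x) := by
  refine (concaveOn_tanh.intervalIntegral_div_self continuous_tanh).congr fun x _ => ?_
  simp only [integral_tanh, cosh_zero, log_one, sub_zero]
end

section
/- For all real x ≥ 0, x²/2 ≤ x·sinh(x)·cosh(x) − log(cosh x)·cosh²(x). (This inequality is equivalent to the nonpositivity of the second derivative of I(x) = log(cosh x)/x.) -/
/-!
With `g x = x sinh x - log (cosh x) cosh x`, the difference of the two sides has derivative
`2 sinh x · g x`, and `g` has derivative `x cosh x - log (cosh x) sinh x`, which is nonnegative for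
`x ≥ 0` because `log (cosh x) ≤ x` and `sinh x ≤ cosh x`. Both functions vanish at `0`, so two
monotonicity arguments give first `g ≥ 0` and then the inequality.
-/

open Real Set

lemma monotoneOn_Ici_of_hasDerivAt_nonneg {f f' : ℝ → ℝ} {a : ℝ}
    (hf : ∀ x, HasDerivAt f (f' x) x) (hf' : ∀ x, a < x → 0 ≤ f' x) :
    MonotoneOn f (Ici a) :=
  monotoneOn_of_hasDerivWithinAt_nonneg (convex_Ici a)
    (fun x _ ↦ (hf x).continuousAt.continuousWithinAt) (fun x _ ↦ (hf x).hasDerivWithinAt)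
    (by simpa only [interior_Ici, mem_Ioi] using hf')

namespace Real

lemma log_cosh_le_self {x : ℝ} (hx : 0 ≤ x) : log (cosh x) ≤ x := by
  have hcosh_le_exp : cosh x ≤ exp x := by
    rw [← cosh_add_sinh]
    linarith [sinh_nonneg_iff.mpr hx]
  simpa using log_le_log (cosh_pos x) hcosh_le_exp

lemma hasDerivAt_log_cosh (x : ℝ) :
    HasDerivAt (fun t ↦ log (cosh t)) (tanh x) x := by
  simpa [tanh_eq_sinh_div_cosh] using (hasDerivAt_cosh x).log (cosh_pos x).ne'

lemma hasDerivAt_mul_sinh_sub_log_cosh_mul_cosh (x : ℝ) :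
    HasDerivAt (fun t ↦ t * sinh t - log (cosh t) * cosh t)
      (x * cosh x - log (cosh x) * sinh x) x := by
  refine (((hasDerivAt_id' x).mul (hasDerivAt_sinh x)).sub
    ((hasDerivAt_log_cosh x).mul (hasDerivAt_cosh x))).congr_deriv ?_
  rw [tanh_eq_sinh_div_cosh]
  field_simp
  ring

lemma log_cosh_mul_cosh_le_mul_sinh {x : ℝ} (hx : 0 ≤ x) :
    log (cosh x) * cosh x ≤ x * sinh x := by
  have hmono := monotoneOn_Ici_of_hasDerivAt_nonneg (a := 0)
    hasDerivAt_mul_sinh_sub_log_cosh_mul_cosh fun y hy ↦ by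
      have hlog : log (cosh y) * sinh y ≤ y * sinh y :=
        mul_le_mul_of_nonneg_right (log_cosh_le_self hy.le) (sinh_nonneg_iff.mpr hy.le)
      have hsinh : y * sinh y ≤ y * cosh y :=
        mul_le_mul_of_nonneg_left (sinh_lt_cosh y).le hy.le
      linarith
  simpa using hmono self_mem_Ici (mem_Ici.mpr hx) hx

lemma hasDerivAt_mul_sinh_mul_cosh_sub_log_cosh_mul_cosh_sq_sub_sq_div_two (x : ℝ) :
    HasDerivAt (fun t ↦ t * sinh t * cosh t - log (cosh t) * cosh t ^ 2 - t ^ 2 / 2)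
      (2 * sinh x * (x * sinh x - log (cosh x) * cosh x)) x := by
  refine (((((hasDerivAt_id' x).mul (hasDerivAt_sinh x)).mul (hasDerivAt_cosh x)).sub
    ((hasDerivAt_log_cosh x).mul ((hasDerivAt_cosh x).pow 2))).sub
    ((hasDerivAt_pow 2 x).div_const 2)).congr_deriv ?_
  simp only [Pi.mul_apply, Pi.pow_apply, tanh_eq_sinh_div_cosh]
  field_simp
  linear_combination 2 * x * cosh_sq_sub_sinh_sq x

end Real

theorem sq_div_two_le (x : ℝ) (hx : 0 ≤ x) :
    x ^ 2 / 2 ≤ x * Real.sinh x * Real.cosh x - Real.log (Real.cosh x) * (Real.cosh x) ^ 2 := by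
  have hmono := monotoneOn_Ici_of_hasDerivAt_nonneg (a := 0)
    hasDerivAt_mul_sinh_mul_cosh_sub_log_cosh_mul_cosh_sq_sub_sq_div_two fun y hy ↦
      mul_nonneg (by positivity) (sub_nonneg.mpr (log_cosh_mul_cosh_le_mul_sinh hy.le))
  have hle := hmono self_mem_Ici (mem_Ici.mpr hx) hx
  simp only [mul_zero, zero_mul, sinh_zero, cosh_zero, log_one, sub_zero] at hle
  linarith
end

section
/- For all real x ≥ 0, x ≤ x·cosh(2x) − sinh(2x)·log(cosh x). -/
/-!
The difference of the two sides is `2 sinh x (x sinh x - cosh x log cosh x)`, by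
`cosh 2x - 1 = 2 sinh² x` and `sinh 2x = 2 sinh x cosh x`. The second factor vanishes at `0` and
has derivative `x cosh x - sinh x log cosh x ≥ 0` for `x ≥ 0`, because `0 ≤ log cosh x ≤ x` and
`sinh x ≤ cosh x`; it is even, so it is nonnegative everywhere.
-/

open Real

namespace Real

theorem log_cosh_le_abs (x : ℝ) : log (cosh x) ≤ |x| := by
  rw [log_le_iff_le_exp (cosh_pos x), ← cosh_abs, cosh_eq]
  have : exp (-|x|) ≤ exp |x| := exp_le_exp.2 (by linarith [abs_nonneg x])
  linarith

theorem hasDerivAt_mul_sinh_sub_cosh_mul_log_cosh (x : ℝ) :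
    HasDerivAt (fun y => y * sinh y - cosh y * log (cosh y))
      (x * cosh x - sinh x * log (cosh x)) x := by
  have hlog : HasDerivAt (fun y => log (cosh y)) (sinh x / cosh x) x :=
    (hasDerivAt_cosh x).log (cosh_pos x).ne'
  refine (((hasDerivAt_id x).mul (hasDerivAt_sinh x)).sub
    ((hasDerivAt_cosh x).mul hlog)).congr_deriv ?_
  rw [mul_div_cancel₀ _ (cosh_pos x).ne', id]
  ring

theorem cosh_mul_log_cosh_le_mul_sinh_of_nonneg {x : ℝ} (hx : 0 ≤ x) :
    cosh x * log (cosh x) ≤ x * sinh x := by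
  set f : ℝ → ℝ := fun y => y * sinh y - cosh y * log (cosh y)
  have hf : MonotoneOn f (Set.Ici 0) := by
    refine monotoneOn_of_hasDerivWithinAt_nonneg (convex_Ici 0)
      (fun y _ => (hasDerivAt_mul_sinh_sub_cosh_mul_log_cosh y).continuousAt.continuousWithinAt)
      (fun y _ => (hasDerivAt_mul_sinh_sub_cosh_mul_log_cosh y).hasDerivWithinAt) ?_
    intro y hy
    rw [interior_Ici, Set.mem_Ioi] at hy
    have hlog : log (cosh y) ≤ y := by simpa [abs_of_pos hy] using log_cosh_le_abs y
    have := mul_le_mul (sinh_lt_cosh y).le hlog (log_nonneg (one_le_cosh y)) (cosh_pos y).le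
    linarith
  simpa [f] using hf Set.self_mem_Ici hx hx

theorem cosh_mul_log_cosh_le_mul_sinh (x : ℝ) : cosh x * log (cosh x) ≤ x * sinh x := by
  rcases le_total 0 x with hx | hx
  · exact cosh_mul_log_cosh_le_mul_sinh_of_nonneg hx
  · simpa using cosh_mul_log_cosh_le_mul_sinh_of_nonneg (neg_nonneg.2 hx)

end Real

theorem le_mul_cosh_sub_sinh_mul_log_cosh (x : ℝ) (hx : 0 ≤ x) :
    x ≤ x * Real.cosh (2 * x) - Real.sinh (2 * x) * Real.log (Real.cosh x) := by
  have hgap : x * cosh (2 * x) - sinh (2 * x) * log (cosh x) - x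
      = 2 * sinh x * (x * sinh x - cosh x * log (cosh x)) := by
    rw [cosh_two_mul, sinh_two_mul]
    linear_combination x * cosh_sq x
  rw [← sub_nonneg, hgap]
  exact mul_nonneg (mul_nonneg zero_le_two (sinh_nonneg_iff.2 hx))
    (sub_nonneg.2 (cosh_mul_log_cosh_le_mul_sinh x))
end

section
/- For all real x > 0, 6·(x·tanh x − log(cosh x)) − 3x²·sech²(x) − 2x³·tanh(x)·sech²(x) ≤ x⁵/6. (Equivalently, the third derivative of I(x) = log(cosh x)/x satisfies I'''(x) ≤ x/6 for x > 0, since I'''(x) = [6(x·tanh x − log(cosh x)) − 3x²·sech²x − 2x³·tanh x·sech²x]/x⁴.) -/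
/-!
Write `N x` for the left-hand side. Then `N 0 = 0` and `N' x = 2x³(2c - 3)/c²` with
`c = cosh² x`, so it suffices that `N' x ≤ 5x⁴/6`, i.e. `24c ≤ 5xc² + 36`. For `x ≥ 4/5` this
follows from `4c² - 24c + 36 = 4(c - 3)² ≥ 0`. For `x ≤ 4/5` the quadratic `5xc² - 24c + 36` is
decreasing in `c` on the relevant range, so it is enough to check it at the Taylor bound
`c ≤ 1 + x² + 2x⁴/5`.
-/

open Real

theorem cosh_le_of_abs_le_one {t : ℝ} (ht : |t| ≤ 1) :
    cosh t ≤ 1 + t ^ 2 / 2 + t ^ 4 / 23 := by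
  have hpos := (abs_le.1 (Real.exp_bound ht (n := 6) (by norm_num))).2
  have hneg := (abs_le.1 (Real.exp_bound (x := -t) (by rwa [abs_neg]) (n := 6) (by norm_num))).2
  have h6 : |t| ^ 6 = t ^ 4 * t ^ 2 := by rw [show 6 = 2 * 3 by rfl, pow_mul, sq_abs]; ring
  simp only [Finset.sum_range_succ, Finset.sum_range_zero, abs_neg, h6] at hpos hneg
  norm_num [Nat.factorial] at hpos hneg
  have ht2 : t ^ 2 ≤ 1 := by nlinarith [sq_abs t, abs_nonneg t]
  rw [cosh_eq]
  nlinarith [mul_nonneg (pow_nonneg (sq_nonneg t) 2) (sub_nonneg.2 ht2)]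

theorem cosh_sq_le_of_abs_le_one {t : ℝ} (ht : |t| ≤ 1) :
    cosh t ^ 2 ≤ 1 + t ^ 2 + 2 / 5 * t ^ 4 := by
  have ht2 : t ^ 2 ≤ 1 := by nlinarith [sq_abs t, abs_nonneg t]
  calc cosh t ^ 2 ≤ (1 + t ^ 2 / 2 + t ^ 4 / 23) ^ 2 :=
        pow_le_pow_left₀ (cosh_pos t).le (cosh_le_of_abs_le_one ht) 2
    _ ≤ 1 + t ^ 2 + 2 / 5 * t ^ 4 := by
        nlinarith [pow_nonneg (sq_nonneg t) 2,
          mul_nonneg (pow_nonneg (sq_nonneg t) 2) (sub_nonneg.2 ht2),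
          mul_nonneg (pow_nonneg (sq_nonneg t) 3) (sub_nonneg.2 ht2)]

theorem twentyFour_mul_cosh_sq_le {t : ℝ} (ht : 0 ≤ t) :
    24 * cosh t ^ 2 ≤ 5 * t * (cosh t ^ 2) ^ 2 + 36 := by
  set c := cosh t ^ 2
  rcases le_total (4 / 5) t with hlarge | hsmall
  · nlinarith [sq_nonneg (c - 3), mul_le_mul_of_nonneg_right hlarge (sq_nonneg c)]
  · have hcu : c ≤ 1 + t ^ 2 + 2 / 5 * t ^ 4 :=
      cosh_sq_le_of_abs_le_one (by rw [abs_of_nonneg ht]; linarith)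
    have hu : 24 * (1 + t ^ 2 + 2 / 5 * t ^ 4) ≤ 5 * t * (1 + t ^ 2 + 2 / 5 * t ^ 4) ^ 2 + 36 := by
      nlinarith [pow_nonneg ht 2, pow_nonneg ht 3, pow_nonneg ht 4, pow_nonneg ht 5,
        mul_nonneg (pow_nonneg ht 2) (sub_nonneg.2 hsmall),
        mul_nonneg (pow_nonneg ht 4) (sub_nonneg.2 hsmall),
        mul_nonneg (pow_nonneg ht 6) (sub_nonneg.2 hsmall),
        mul_nonneg (pow_nonneg ht 8) (sub_nonneg.2 hsmall)]
    have hsum : 5 * t * (c + (1 + t ^ 2 + 2 / 5 * t ^ 4)) ≤ 24 := by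
      have ht2 : t ^ 2 ≤ 16 / 25 := by nlinarith
      nlinarith [mul_le_mul_of_nonneg_left hsmall
        (by positivity : 0 ≤ c + (1 + t ^ 2 + 2 / 5 * t ^ 4))]
    -- `q c - q u = (u - c) (24 - 5t (c + u))` for `q c = 5tc² - 24c + 36`
    nlinarith [mul_nonneg (sub_nonneg.2 hcu) (sub_nonneg.2 hsum)]

theorem Real.hasDerivAt_tanh_s14 (x : ℝ) : HasDerivAt tanh (1 / cosh x ^ 2) x := by
  rw [show tanh = sinh / cosh from funext tanh_eq_sinh_div_cosh]
  refine ((hasDerivAt_sinh x).div (hasDerivAt_cosh x) (cosh_pos x).ne').congr_deriv ?_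
  rw [← cosh_sq_sub_sinh_sq x]
  ring

noncomputable def thirdDerivNumerator (x : ℝ) : ℝ :=
  6 * (x * tanh x - log (cosh x)) - 3 * x ^ 2 * (1 / cosh x) ^ 2 -
    2 * x ^ 3 * tanh x * (1 / cosh x) ^ 2

theorem thirdDerivNumerator_zero : thirdDerivNumerator 0 = 0 := by
  simp [thirdDerivNumerator]

theorem hasDerivAt_thirdDerivNumerator (x : ℝ) :
    HasDerivAt thirdDerivNumerator (2 * x ^ 3 * (2 * cosh x ^ 2 - 3) / cosh x ^ 4) x := by
  have hc : cosh x ≠ 0 := (cosh_pos x).ne'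
  have hsech := ((hasDerivAt_const x (1 : ℝ)).fun_div (hasDerivAt_cosh x) hc).fun_pow 2
  have htanh := hasDerivAt_tanh_s14 x
  have hlog := (hasDerivAt_cosh x).log hc
  have h := (((((hasDerivAt_id' x).fun_mul htanh).fun_sub hlog).const_mul 6).fun_sub
    (((hasDerivAt_pow 2 x).const_mul 3).fun_mul hsech)).fun_sub
    ((((hasDerivAt_pow 3 x).const_mul 2).fun_mul htanh).fun_mul hsech)
  refine h.congr_deriv ?_
  simp only [tanh_eq_sinh_div_cosh, Nat.cast_ofNat, Nat.reduceSub, pow_one]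
  field_simp
  linear_combination (-4 * x ^ 3) * cosh_sq_sub_sinh_sq x

theorem deriv_thirdDerivNumerator_le {t : ℝ} (ht : 0 ≤ t) :
    deriv thirdDerivNumerator t ≤ 5 * t ^ 4 / 6 := by
  rw [(hasDerivAt_thirdDerivNumerator t).deriv, div_le_iff₀ (by positivity)]
  nlinarith [mul_le_mul_of_nonneg_left (twentyFour_mul_cosh_sq_le ht) (pow_nonneg ht 3)]

theorem third_deriv_ineq (x : ℝ) (hx : 0 < x) :
    6 * (x * Real.tanh x - Real.log (Real.cosh x)) -
        3 * x ^ 2 * (1 / Real.cosh x) ^ 2 -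
        2 * x ^ 3 * Real.tanh x * (1 / Real.cosh x) ^ 2 ≤ x ^ 5 / 6 := by
  have hf (t : ℝ) := ((hasDerivAt_pow 5 t).div_const 6).fun_sub
    (hasDerivAt_thirdDerivNumerator t).differentiableAt.hasDerivAt
  have hmono : MonotoneOn (fun t ↦ t ^ 5 / 6 - thirdDerivNumerator t) (Set.Ici 0) :=
    monotoneOn_of_hasDerivWithinAt_nonneg (convex_Ici 0)
      (fun t _ ↦ (hf t).continuousAt.continuousWithinAt) (fun t _ ↦ (hf t).hasDerivWithinAt)
      (fun t ht ↦ by simpa using deriv_thirdDerivNumerator_le (interior_subset ht))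
  show thirdDerivNumerator x ≤ x ^ 5 / 6
  linarith [hmono Set.self_mem_Ici hx.le hx.le, thirdDerivNumerator_zero]
end

section
/- For all real x ≥ 0, 2·(cosh(2x) − 2) ≤ (5/6)·x·cosh⁴(x). -/
open Real

lemma cosh_upper {x : ℝ} (hx : 0 ≤ x) (hx1 : x ≤ 1) :
    Real.cosh x ≤ 1 + x ^ 2 / 2 + x ^ 4 * (5 / 96) := by
  have habs : |x| = x := abs_of_nonneg hx
  have h1 := Real.exp_bound (by rw [habs]; exact hx1) (n := 4) (by norm_num)
  have h2 := Real.exp_bound (x := -x) (by rw [abs_neg, habs]; exact hx1) (n := 4) (by norm_num)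
  rw [habs] at h1
  rw [abs_neg, habs] at h2
  have e1 : ∑ m ∈ Finset.range 4, x ^ m / m.factorial = 1 + x + x ^ 2 / 2 + x ^ 3 / 6 := by
    simp [Finset.sum_range_succ, Nat.factorial]
  have e2 : ∑ m ∈ Finset.range 4, (-x) ^ m / m.factorial = 1 - x + x ^ 2 / 2 - x ^ 3 / 6 := by
    simp [Finset.sum_range_succ, Nat.factorial]
    ring
  rw [e1] at h1
  rw [e2] at h2
  have hb1 := (abs_sub_le_iff.1 h1).1
  have hb2 := (abs_sub_le_iff.1 h2).1
  rw [Real.cosh_eq]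
  norm_num [Nat.factorial] at hb1 hb2 ⊢
  nlinarith [pow_nonneg hx 4]

theorem cosh_two_mul_sub_two_le (x : ℝ) (hx : 0 ≤ x) :
    2 * (Real.cosh (2 * x) - 2) ≤ (5 / 6) * x * (Real.cosh x) ^ 4 := by
  have hc1 : (1:ℝ) ≤ Real.cosh x := Real.one_le_cosh x
  have hsq : Real.sinh x ^ 2 = Real.cosh x ^ 2 - 1 := Real.sinh_sq x
  rw [Real.cosh_two_mul, hsq]
  rcases le_or_gt (4/5 : ℝ) x with hbig | hsmall
  · nlinarith [sq_nonneg (Real.cosh x ^ 2 - 3), pow_nonneg (le_trans zero_le_one hc1) 4]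
  · have hup : Real.cosh x ≤ 1 + x ^ 2 / 2 + x ^ 4 * (5 / 96) :=
      cosh_upper hx (by linarith)
    have hs : x ≤ Real.sinh x := by
      rcases eq_or_lt_of_le hx with h | h
      · simp [← h]
      · exact (Real.self_lt_sinh_iff.2 h).le
    have hlow : 1 + x ^ 2 ≤ Real.cosh x ^ 2 := by nlinarith
    have h4 : Real.cosh x ^ 2 ≤ (1 + x ^ 2 / 2 + x ^ 4 * (5 / 96)) ^ 2 := by nlinarith
    have h5 : (1 + x ^ 2) ^ 2 ≤ Real.cosh x ^ 4 := by nlinarith [sq_nonneg (1 + x ^ 2)]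
    have hpoly : 4 * (1 + x ^ 2 / 2 + x ^ 4 * (5 / 96)) ^ 2 - 6 ≤ 5 / 6 * x * (1 + x ^ 2) ^ 2 := by
      nlinarith [mul_nonneg hx (sub_nonneg.2 hsmall.le), sq_nonneg x, pow_nonneg hx 3,
        pow_nonneg hx 4, pow_nonneg hx 5, pow_nonneg hx 6, pow_nonneg hx 7, pow_nonneg hx 8,
        mul_nonneg (mul_nonneg hx hx) (sub_nonneg.2 hsmall.le),
        mul_nonneg (pow_nonneg hx 3) (sub_nonneg.2 hsmall.le),
        mul_nonneg (pow_nonneg hx 4) (sub_nonneg.2 hsmall.le)]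
    have h6 : 5 / 6 * x * (1 + x ^ 2) ^ 2 ≤ 5 / 6 * x * Real.cosh x ^ 4 := by
      have : (0:ℝ) ≤ 5 / 6 * x := by positivity
      nlinarith [mul_le_mul_of_nonneg_left h5 this]
    linarith
end

section
/- The improper integral ∫₀^∞ y⁵ / sinh²(y) dy converges and equals 15·ζ(5)/2, where ζ is the Riemann zeta function. -/
open Real Set MeasureTheory

lemma hasSum_sinh_sq (t : ℝ) (ht : 0 < t) :
    HasSum (fun n : ℕ => (4 * n : ℝ) * Real.exp (-(2 * n) * t)) (1 / Real.sinh t ^ 2) := by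
  have hr : ‖Real.exp (-2 * t)‖ < 1 := by
    rw [Real.norm_eq_abs, abs_of_pos (Real.exp_pos _)]
    exact Real.exp_lt_one_iff.mpr (by linarith)
  have h := (hasSum_coe_mul_geometric_of_norm_lt_one hr).mul_left 4
  have heq : ∀ n : ℕ, (4 * n : ℝ) * Real.exp (-(2 * n) * t)
      = 4 * ((n : ℝ) * Real.exp (-2 * t) ^ n) := by
    intro n
    rw [← Real.exp_nat_mul]
    ring_nf
  have h2 : Real.exp (-2 * t) = Real.exp (-t) ^ 2 := by
    rw [← Real.exp_nat_mul]; ring_nf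
  have key : 1 - Real.exp (-2 * t) = Real.exp (-t) * (2 * Real.sinh t) := by
    rw [Real.sinh_eq, h2]
    have huv : Real.exp (-t) * Real.exp t = 1 := by rw [← Real.exp_add]; simp
    nlinarith [huv]
  have hsne : Real.sinh t ≠ 0 := ne_of_gt (Real.sinh_pos_iff.mpr ht)
  have hene : Real.exp (-t) ≠ 0 := Real.exp_ne_zero _
  have hval : 4 * (Real.exp (-2 * t) / (1 - Real.exp (-2 * t)) ^ 2) = 1 / Real.sinh t ^ 2 := by
    rw [key, h2]
    field_simp
    ring
  rw [← hval]
  exact h.congr_fun heq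

lemma integrable_f : IntegrableOn (fun y => y ^ 5 / Real.sinh y ^ 2) (Ioi (0:ℝ)) := by
  have hmeas : Measurable fun y : ℝ => y ^ 5 / Real.sinh y ^ 2 := by
    exact (measurable_id.pow_const 5).div ((Real.measurable_sinh).pow_const 2)
  rw [← Ioc_union_Ioi_eq_Ioi (zero_le_one' ℝ)]
  apply IntegrableOn.union
  · -- bounded by 1 on Ioc 0 1
    apply Measure.integrableOn_of_bounded measure_Ioc_lt_top.ne hmeas.aestronglyMeasurable (M := 1)
    filter_upwards [ae_restrict_mem measurableSet_Ioc] with y hy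
    have hy0 : 0 < y := hy.1
    have hs : y < Real.sinh y := Real.self_lt_sinh_iff.mpr hy0
    have h1 : y ^ 2 ≤ Real.sinh y ^ 2 := by nlinarith
    rw [Real.norm_eq_abs, abs_of_nonneg (by positivity)]
    calc y ^ 5 / Real.sinh y ^ 2 ≤ y ^ 5 / y ^ 2 :=
          div_le_div_of_nonneg_left (by positivity) (by positivity) h1
      _ = y ^ 3 := by field_simp
      _ ≤ 1 := pow_le_one₀ hy0.le hy.2
  · apply integrable_of_isBigO_exp_neg (one_pos)
    · apply ContinuousOn.div (by fun_prop) (by fun_prop)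
      intro y hy
      have : 0 < Real.sinh y := Real.sinh_pos_iff.mpr (lt_of_lt_of_le one_pos hy)
      positivity
    · rw [Asymptotics.isBigO_iff]
      set c : ℝ := (1 - Real.exp (-2)) / 2 with hcdef
      have hc : 0 < c := by
        have : Real.exp (-2) < 1 := Real.exp_lt_one_iff.mpr (by norm_num)
        simp only [hcdef]; linarith
      refine ⟨1 / c ^ 2, ?_⟩
      have h5 := (Real.tendsto_pow_mul_exp_neg_atTop_nhds_zero 5).eventually
        (eventually_le_nhds zero_lt_one)
      filter_upwards [h5, Filter.eventually_ge_atTop (1:ℝ)] with y h5y hy1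
      have hEy : Real.exp (-y) ≤ Real.exp (-2) * Real.exp y := by
        rw [← Real.exp_add]; exact Real.exp_le_exp.mpr (by linarith)
      have hsinh : c * Real.exp y ≤ Real.sinh y := by
        rw [Real.sinh_eq, hcdef]; nlinarith [Real.exp_pos y]
      have hspos : 0 < Real.sinh y := Real.sinh_pos_iff.mpr (by linarith)
      have hs2 : c ^ 2 * Real.exp y ^ 2 ≤ Real.sinh y ^ 2 := by
        nlinarith [Real.exp_pos y, mul_pos hc (Real.exp_pos y)]
      rw [Real.norm_eq_abs, Real.norm_eq_abs, abs_of_nonneg (by positivity),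
        abs_of_nonneg (Real.exp_pos _).le]
      calc y ^ 5 / Real.sinh y ^ 2 ≤ y ^ 5 / (c ^ 2 * Real.exp y ^ 2) :=
            div_le_div_of_nonneg_left (by positivity) (by positivity) hs2
        _ = y ^ 5 * Real.exp (-y) * Real.exp (-y) * (1 / c ^ 2) := by
            rw [Real.exp_neg]; field_simp
        _ ≤ 1 * Real.exp (-y) * (1 / c ^ 2) := by
            apply mul_le_mul_of_nonneg_right _ (by positivity)
            exact mul_le_mul_of_nonneg_right h5y (Real.exp_pos _).le
        _ = 1 / c ^ 2 * Real.exp (-1 * y) := by rw [neg_one_mul]; ring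

theorem integral_pow_five_div_sinh_sq :
    IntegrableOn (fun y => y ^ 5 / (Real.sinh y) ^ 2) (Ioi (0:ℝ)) ∧
    ((∫ y in Ioi (0:ℝ), y ^ 5 / (Real.sinh y) ^ 2 : ℝ) : ℂ) = 15 * riemannZeta 5 / 2 := by
  refine ⟨integrable_f, ?_⟩
  set F : ℝ → ℂ := fun t => ((1 / Real.sinh t ^ 2 : ℝ) : ℂ) with hF
  have hp : ∀ n : ℕ, ((4 * n : ℕ) : ℂ) = 0 ∨ 0 < ((2 * n : ℕ) : ℝ) := by
    intro n
    rcases Nat.eq_zero_or_pos n with h | h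
    · left; simp [h]
    · right; positivity
  have hs6 : (0:ℝ) < (6:ℂ).re := by norm_num
  have hFsum : ∀ t ∈ Ioi (0:ℝ), HasSum
      (fun n : ℕ => ((4 * n : ℕ) : ℂ) * Real.exp (-((2 * n : ℕ) : ℝ) * t)) (F t) := by
    intro t ht
    have := Complex.hasSum_ofReal.mpr (hasSum_sinh_sq t ht)
    refine this.congr_fun fun n => ?_
    push_cast
    ring_nf
  have hsum : Summable fun n : ℕ => ‖((4 * n : ℕ) : ℂ)‖ / ((2 * n : ℕ) : ℝ) ^ (6:ℂ).re := by
    have hbase : Summable fun n : ℕ => (1/16 : ℝ) * (n : ℝ) ^ (-(5:ℝ)) :=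
      (Real.summable_nat_rpow.mpr (by norm_num)).mul_left _
    refine hbase.congr fun n => ?_
    rcases Nat.eq_zero_or_pos n with h | h
    · simp [h, Real.zero_rpow (by norm_num : (-(5:ℝ)) ≠ 0),
        Real.zero_rpow (by norm_num : ((6:ℂ).re) ≠ 0)]
    · have hn : (0:ℝ) < n := by exact_mod_cast h
      have h6 : ((6:ℂ).re) = ((6:ℕ) : ℝ) := by norm_num
      have hn' : (n:ℝ) ≠ 0 := hn.ne'
      rw [h6, Real.rpow_natCast, Real.rpow_neg hn.le,
        show ((5:ℝ)) = ((5:ℕ):ℝ) by norm_num, Real.rpow_natCast,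
        Complex.norm_natCast]
      push_cast
      field_simp
      ring
  have hmel := hasSum_mellin hp hs6 hFsum hsum
  have hterm : ∀ n : ℕ, Complex.Gamma 6 * ((4 * n : ℕ) : ℂ) / (((2 * n : ℕ) : ℝ) : ℂ) ^ (6:ℂ)
      = (15/2 : ℂ) * (1 / (n : ℂ) ^ (5:ℂ)) := by
    intro n
    have hG : Complex.Gamma 6 = 120 := by
      have h := Complex.Gamma_nat_eq_factorial 5
      rw [show ((5:ℕ):ℂ) + 1 = 6 by norm_num] at h
      rw [h]
      norm_num [Nat.factorial]
    rcases Nat.eq_zero_or_pos n with h | h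
    · simp [h, Complex.zero_cpow (by norm_num : (6:ℂ) ≠ 0),
        Complex.zero_cpow (by norm_num : (5:ℂ) ≠ 0)]
    · have hn : ((n:ℂ)) ≠ 0 := Nat.cast_ne_zero.mpr h.ne'
      have h6 : ((((2 * n : ℕ) : ℝ)) : ℂ) ^ (6:ℂ) = (((2 * n : ℕ) : ℂ)) ^ (6:ℕ) := by
        rw [show ((6:ℂ)) = ((6:ℕ):ℂ) by norm_num, Complex.cpow_natCast]
        norm_num
      have h5 : ((n:ℂ)) ^ (5:ℂ) = ((n:ℂ)) ^ (5:ℕ) := by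
        rw [show ((5:ℂ)) = ((5:ℕ):ℂ) by norm_num, Complex.cpow_natCast]
      rw [hG, h6, h5]
      push_cast
      field_simp
      ring
  have hzeta : riemannZeta 5 = ∑' n : ℕ, 1 / (n : ℂ) ^ (5:ℂ) :=
    zeta_eq_tsum_one_div_nat_cpow (by norm_num)
  have hmel2 : mellin F 6 = 15 * riemannZeta 5 / 2 := by
    rw [← hmel.tsum_eq, tsum_congr hterm, tsum_mul_left, ← hzeta]
    ring
  rw [← hmel2, mellin]
  have hre : ((∫ y in Ioi (0:ℝ), y ^ 5 / Real.sinh y ^ 2 : ℝ) : ℂ)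
      = ∫ t in Ioi (0:ℝ), ((t ^ 5 / Real.sinh t ^ 2 : ℝ) : ℂ) :=
    (integral_ofReal (𝕜 := ℂ)).symm
  rw [hre]
  refine setIntegral_congr_fun measurableSet_Ioi fun t ht => ?_
  have ht' : (0:ℝ) < t := ht
  have hpow : (t : ℂ) ^ ((6:ℂ) - 1) = ((t ^ 5 : ℝ) : ℂ) := by
    rw [show ((6:ℂ) - 1) = ((5:ℕ):ℂ) by norm_num, Complex.cpow_natCast]
    push_cast
    ring
  rw [smul_eq_mul, hpow, hF]
  push_cast
  ring
end

section
/- For every x ∈ (0,1), the function ψ̃(t) := cot(πt/2) − 2/(πt) is differentiable at x and its derivative equals −(2/π)·∑_{k ∈ ℤ, k ≠ 0} 1/(2k + x)², where the sum converges absolutely. -/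
/-!
The Fourier coefficients of `t ↦ exp (2πiat)` on `[0, 1]` are `(exp (2πia) - 1) / (2πi(a - n))`,
so Parseval's identity gives `∑_{n ∈ ℤ} 1 / (a - n)² = π² / sin² (πa)` for non-integral `a`.
Taking `a = x / 2` and removing the term `k = 0` gives
`∑_{k ≠ 0} 1 / (2k + x)² = π² / (4 sin² (πx/2)) - 1 / x²`, which is `-π/2` times the derivative of
`cot (πt/2) - 2 / (πt)` at `x`.
-/

open Real Set MeasureTheory

lemma fourierCoeffOn_exp_mul_I (a : ℝ) (n : ℤ) (ha : a ≠ n) :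
    fourierCoeffOn zero_lt_one (fun t : ℝ => Complex.exp (↑(2 * π * a * t) * Complex.I)) n =
      (Complex.exp (↑(2 * π * a) * Complex.I) - 1) / (↑(2 * π * (a - n)) * Complex.I) := by
  set c : ℂ := ↑(2 * π * (a - n)) * Complex.I
  have hc : c ≠ 0 := by
    have : 2 * π * (a - n) ≠ 0 := by
      have := sub_ne_zero.mpr ha
      positivity
    exact mul_ne_zero (Complex.ofReal_ne_zero.mpr this) Complex.I_ne_zero
  have hexp : Complex.exp c = Complex.exp (↑(2 * π * a) * Complex.I) := by
    rw [show c = ↑(2 * π * a) * Complex.I - n * (2 * π * Complex.I) by push_cast [c]; ring,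
      Complex.exp_sub, Complex.exp_int_mul_two_pi_mul_I, div_one]
  rw [fourierCoeffOn_eq_integral]
  calc _ = ∫ t in (0:ℝ)..1, Complex.exp (c * t) := by
        simp only [fourier_coe_apply, smul_eq_mul, ← Complex.exp_add, sub_zero, div_one, one_smul]
        congr! 3 with t
        push_cast [c]
        ring
    _ = _ := by rw [integral_exp_mul_complex hc]; simp [hexp]

lemma norm_fourierCoeffOn_exp_mul_I_sq (a : ℝ) (n : ℤ) (ha : a ≠ n) :
    ‖fourierCoeffOn zero_lt_one (fun t : ℝ => Complex.exp (↑(2 * π * a * t) * Complex.I)) n‖ ^ 2 =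
      Real.sin (π * a) ^ 2 / π ^ 2 * (1 / (a - n) ^ 2) := by
  have hπ := Real.pi_ne_zero
  have han : a - n ≠ 0 := sub_ne_zero.mpr ha
  rw [fourierCoeffOn_exp_mul_I a n ha, norm_div, norm_mul, Complex.norm_I, mul_one,
    Complex.norm_real, mul_comm _ Complex.I, Complex.norm_exp_I_mul_ofReal_sub_one,
    show 2 * π * a / 2 = π * a by ring]
  simp only [Real.norm_eq_abs, div_pow, abs_mul, mul_pow, sq_abs]
  field_simp

theorem HasSum.subtype_ne {α β : Type*} [AddCommGroup α] [TopologicalSpace α]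
    [IsTopologicalAddGroup α] {f : β → α} {a : α} (h : HasSum f a) (b : β) :
    HasSum (fun k : {k // k ≠ b} => f k) (a - f b) :=
  (hasSum_singleton b f).hasSum_compl_iff.mpr (by rwa [add_sub_cancel])

theorem hasSum_one_div_sub_int_sq {a : ℝ} (ha : ∀ n : ℤ, a ≠ n) :
    HasSum (fun n : ℤ => 1 / (a - n) ^ 2) (π ^ 2 / Real.sin (π * a) ^ 2) := by
  have hsin : Real.sin (π * a) ≠ 0 := by
    rw [Real.sin_ne_zero_iff]
    intro n h
    exact ha n (by nlinarith [Real.pi_pos])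
  set f : ℝ → ℂ := fun t => Complex.exp (↑(2 * π * a * t) * Complex.I)
  have hf_norm : ∀ t, ‖f t‖ = 1 := fun t => Complex.norm_exp_ofReal_mul_I _
  have hf_memLp : MemLp f 2 (volume.restrict (Ioc 0 1)) :=
    MemLp.of_bound (by fun_prop : Continuous f).aestronglyMeasurable 1
      (Filter.Eventually.of_forall fun t => (hf_norm t).le)
  have hParseval := hasSum_sq_fourierCoeffOn zero_lt_one hf_memLp
  simp only [hf_norm, one_pow, intervalIntegral.integral_const, sub_zero, inv_one, one_smul,
    f, norm_fourierCoeffOn_exp_mul_I_sq a _ (ha _)] at hParseval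
  have hScaled := hParseval.mul_left (π ^ 2 / Real.sin (π * a) ^ 2)
  rw [mul_one] at hScaled
  refine hScaled.congr_fun fun n => ?_
  rw [← mul_assoc, div_mul_div_comm, mul_comm (π ^ 2),
    div_self (mul_ne_zero (pow_ne_zero 2 hsin) (pow_ne_zero 2 Real.pi_ne_zero)), one_mul]

theorem hasSum_one_div_two_mul_int_add_sq {x : ℝ} (hx : ∀ k : ℤ, x ≠ 2 * k) :
    HasSum (fun k : ℤ => 1 / (2 * k + x) ^ 2) (π ^ 2 / (4 * Real.sin (π * x / 2) ^ 2)) := by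
  have h := (hasSum_one_div_sub_int_sq (a := x / 2) fun n h => hx n (by linarith)).div_const 4
  have hterm : (fun k : ℤ => 1 / (2 * k + x) ^ 2) =
      (fun n : ℤ => 1 / (x / 2 - n) ^ 2 / 4) ∘ Equiv.neg ℤ := by
    funext k
    simp only [Function.comp_apply, Equiv.neg_apply, Int.cast_neg]
    field_simp
    ring
  rw [← mul_div_assoc, div_div, mul_comm _ (4 : ℝ)] at h
  rwa [hterm, Equiv.hasSum_iff]

theorem Real.hasDerivAt_cot {x : ℝ} (hx : Real.sin x ≠ 0) :
    HasDerivAt Real.cot (-1 / Real.sin x ^ 2) x := by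
  have h := (Real.hasDerivAt_cos x).div (Real.hasDerivAt_sin x) hx
  rw [show -Real.sin x * Real.sin x - Real.cos x * Real.cos x = -1 by
    nlinarith [Real.sin_sq_add_cos_sq x]] at h
  rwa [show Real.cot = fun y => Real.cos y / Real.sin y from funext Real.cot_eq_cos_div_sin]

theorem hasDerivAt_cot_pi_mul_div_two_sub_two_div {x : ℝ} (hx : x ≠ 0)
    (hsin : Real.sin (π * x / 2) ≠ 0) :
    HasDerivAt (fun t : ℝ => Real.cot (π * t / 2) - 2 / (π * t))
      (-(2 / π) * (π ^ 2 / (4 * Real.sin (π * x / 2) ^ 2) - 1 / x ^ 2)) x := by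
  have hlin : HasDerivAt (fun t => π * t / 2) (π / 2) x := by
    simpa using ((hasDerivAt_id x).const_mul π).div_const 2
  have hcot := (Real.hasDerivAt_cot hsin).comp x hlin
  have hinv := (hasDerivAt_inv hx).const_mul (2 / π)
  have hψ : (fun t => Real.cot (π * t / 2) - 2 / (π * t)) =
      (Real.cot ∘ fun t => π * t / 2) - fun t => 2 / π * t⁻¹ := by
    funext t
    simp only [Pi.sub_apply, Function.comp_apply]
    ring
  rw [hψ]
  refine (hcot.sub hinv).congr_deriv ?_
  field_simp
  ring

theorem deriv_cot_tilde (x : ℝ) (hx : x ∈ Ioo (0:ℝ) 1) :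
    Summable (fun k : {k : ℤ // k ≠ 0} => 1 / (2 * (k : ℝ) + x) ^ 2) ∧
    HasDerivAt (fun t : ℝ => Real.cot (π * t / 2) - 2 / (π * t))
      (-(2 / π) * ∑' k : {k : ℤ // k ≠ 0}, 1 / (2 * (k : ℝ) + x) ^ 2) x := by
  obtain ⟨hx0, hx1⟩ := hx
  have hx_not_even : ∀ k : ℤ, x ≠ 2 * k := by
    rintro k rfl
    have : (0 : ℤ) < k := by exact_mod_cast (by linarith : (0 : ℝ) < k)
    have : k < (1 : ℤ) := by exact_mod_cast (by linarith : (k : ℝ) < 1)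
    omega
  have hsin : Real.sin (π * x / 2) ≠ 0 := by
    refine (Real.sin_pos_of_pos_of_lt_pi (by positivity) ?_).ne'
    nlinarith [Real.pi_pos]
  have hS := (hasSum_one_div_two_mul_int_add_sq hx_not_even).subtype_ne 0
  rw [Int.cast_zero, mul_zero, zero_add] at hS
  rw [hS.tsum_eq]
  exact ⟨hS.summable, hasDerivAt_cot_pi_mul_div_two_sub_two_div hx0.ne' hsin⟩
end
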